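/- Let X be a θ_4-graph on n vertices consisting of two vertices v, w joined by four pairwise internally disjoint paths P_1, P_2, P_3, P_4 of lengths p_1 = 1 < p_2 ≤ p_3 ≤ p_4 (so n = p_2 + p_3 + p_4 − 1). Then FS(X, Star_n) contains a cycle of length 4 + 4p_2 + 2(p_3 + p_4); in particular, g(FS(X, Star_n)) ≤ 4 + 4p_2 + 2(p_3 + p_4). -/

import Mathlib

open SimpleGraph

/-- The friends-and-strangers graph `FS X Y`: its vertices are the bijections from `V(X)`
to `V(Y)`, with `σ, τ` adjacent iff they differ by a swap along an edge of `X` whose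
images under `σ` form an edge of `Y`. -/
def FS {V W : Type*} (X : SimpleGraph V) (Y : SimpleGraph W) : SimpleGraph (V ≃ W) where
  Adj σ τ := ∃ a b : V, X.Adj a b ∧ Y.Adj (σ a) (σ b) ∧ τ a = σ b ∧ τ b = σ a ∧
      ∀ c : V, c ≠ a → c ≠ b → τ c = σ c
  symm := by
    constructor
    rintro σ τ ⟨a, b, hX, hY, h1, h2, h3⟩
    refine ⟨a, b, hX, ?_, h2.symm, h1.symm, fun c hca hcb => (h3 c hca hcb).symm⟩
    rw [h1, h2]; exact hY.symm
  loopless := by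
    constructor
    rintro σ ⟨a, b, hX, hY, h1, h2, h3⟩
    exact hY.ne h1

/-- The star graph on `Fin n`: the vertex with value `n - 1` (playing the role of the
vertex `n` of `{1, …, n}`) is adjacent to all other vertices, and there are no
other edges. -/
def starGraphFin (n : ℕ) : SimpleGraph (Fin n) where
  Adj a b := a ≠ b ∧ (a.val = n - 1 ∨ b.val = n - 1)
  symm := by constructor; rintro a b ⟨h1, h2⟩; exact ⟨h1.symm, h2.symm⟩
  loopless := by constructor; rintro a ⟨h, _⟩; exact h rfl

/-!
In `FS(X, Star_n)` every step moves the token sitting on the centre of the star (the "hole")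
across an edge of `X`. So a closed walk of the hole in `X`, along which the product of the
transpositions is trivial and the intermediate configurations are pairwise distinct, gives a
cycle of `FS(X, Star_n)` of the same length.

In the θ₄-graph, let the hole start at `w` and go around the loops `δ = p₂⁻¹ p₁ p₃⁻¹ p₂` and
`γ = p₁⁻¹ p₄` in the order `δ γ δ⁻¹ γ⁻¹`, a route of length `4 + 4p₂ + 2(p₃ + p₄)`. Going
around `δ` fixes `v` and moves only vertices of `p₂` and `p₃`, while going around `γ` moves
only `v` and the interior of `p₄`. So the two permutations commute and the commutator returns
every token home. The configurations along the route are pairwise distinct because the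
positions of the hole and of the tokens starting at `v` and at the penultimate vertex of `p₂`
already determine the time.
-/

namespace SimpleGraph.Walk

variable {V : Type*} {G : SimpleGraph V} {u v w : V}

lemma IsPath.getVert_ne_start {p : G.Walk u v} (hp : p.IsPath) {i : ℕ} (hi₀ : 0 < i)
    (hi : i ≤ p.length) : p.getVert i ≠ u :=
  fun h => hi₀.ne' ((hp.getVert_eq_start_iff hi).mp h)

lemma IsPath.getVert_ne_end {p : G.Walk u v} (hp : p.IsPath) {i : ℕ} (hi : i < p.length) :
    p.getVert i ≠ v :=
  fun h => hi.ne ((hp.getVert_eq_end_iff hi.le).mp h)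

lemma IsPath.getVert_notMem_of_disjoint {p q : G.Walk u v} (hp : p.IsPath)
    (hd : ∀ x ∈ p.support, x ∈ q.support → x = u ∨ x = v) {i : ℕ} (hi₀ : 0 < i)
    (hi : i < p.length) : p.getVert i ∉ q.support := fun hq => by
  rcases hd _ (p.getVert_mem_support i) hq with h | h
  exacts [hp.getVert_ne_start hi₀ hi.le h, hp.getVert_ne_end hi h]

variable [DecidableEq V]

/-- The permutation of tokens after the hole, starting at `u`, has slid along the first `k`
steps of `p`: the token that started at `x` now sits at `(p.slidePerm k)⁻¹ x`. -/
def slidePerm (p : G.Walk u v) (k : ℕ) : Equiv.Perm V :=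
  ((p.darts.take k).map fun d => Equiv.swap d.fst d.snd).prod

variable {x : V}

@[simp]
lemma slidePerm_zero (p : G.Walk u v) : p.slidePerm 0 = 1 := by
  simp [slidePerm]

lemma slidePerm_succ (p : G.Walk u v) {k : ℕ} (hk : k < p.length) :
    p.slidePerm (k + 1) = p.slidePerm k * Equiv.swap (p.getVert k) (p.getVert (k + 1)) := by
  have hk' : k < p.darts.length := by simpa using hk
  simp [slidePerm, List.take_add_one, List.getElem?_eq_getElem hk', darts_getElem_eq_getVert]

lemma slidePerm_length (p : G.Walk u v) :
    p.slidePerm p.length = (p.darts.map fun d => Equiv.swap d.fst d.snd).prod := by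
  rw [slidePerm, List.take_of_length_le (by simp)]

lemma slidePerm_append_of_le (p : G.Walk u v) (q : G.Walk v w) {k : ℕ}
    (hk : k ≤ p.length) : (p.append q).slidePerm k = p.slidePerm k := by
  rw [slidePerm, slidePerm, darts_append, List.take_append_of_le_length (by simpa using hk)]

lemma slidePerm_append_length_add (p : G.Walk u v) (q : G.Walk v w) (k : ℕ) :
    (p.append q).slidePerm (p.length + k) = p.slidePerm p.length * q.slidePerm k := by
  have h := List.take_length_add_append (l₁ := p.darts) (l₂ := q.darts) k
  rw [length_darts] at h
  rw [slidePerm, darts_append, h, List.map_append, List.prod_append, slidePerm_length,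
    slidePerm]

lemma slidePerm_length_append (p : G.Walk u v) (q : G.Walk v w) :
    (p.append q).slidePerm (p.append q).length =
      p.slidePerm p.length * q.slidePerm q.length := by
  rw [length_append, slidePerm_append_length_add]

lemma inv_slidePerm_append_length_add_apply (p : G.Walk u v) (q : G.Walk v w) (k : ℕ)
    (x : V) : ((p.append q).slidePerm (p.length + k))⁻¹ x =
      (q.slidePerm k)⁻¹ ((p.slidePerm p.length)⁻¹ x) := by
  rw [slidePerm_append_length_add, mul_inv_rev, Equiv.Perm.mul_apply]

lemma slidePerm_reverse (p : G.Walk u v) :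
    p.reverse.slidePerm p.reverse.length = (p.slidePerm p.length)⁻¹ := by
  rw [slidePerm_length, slidePerm_length, List.prod_inv_reverse, darts_reverse]
  simp [Function.comp_def, Equiv.swap_comm]

lemma slidePerm_apply_getVert (p : G.Walk u v) {k : ℕ} (hk : k ≤ p.length) :
    p.slidePerm k (p.getVert k) = u := by
  induction k with
  | zero => simp
  | succ k ih =>
    rw [p.slidePerm_succ (by omega), Equiv.Perm.mul_apply, Equiv.swap_apply_right,
      ih (by omega)]

lemma inv_slidePerm_apply_start (p : G.Walk u v) {k : ℕ} (hk : k ≤ p.length) :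
    (p.slidePerm k)⁻¹ u = p.getVert k := by
  rw [Equiv.Perm.inv_eq_iff_eq, p.slidePerm_apply_getVert hk]

lemma inv_slidePerm_length_apply_start (p : G.Walk u v) : (p.slidePerm p.length)⁻¹ u = v := by
  simpa using p.inv_slidePerm_apply_start le_rfl

lemma inv_slidePerm_succ_apply (p : G.Walk u v) {k : ℕ} (hk : k < p.length) (x : V) :
    (p.slidePerm (k + 1))⁻¹ x =
      Equiv.swap (p.getVert k) (p.getVert (k + 1)) ((p.slidePerm k)⁻¹ x) := by
  rw [p.slidePerm_succ hk, mul_inv_rev, Equiv.swap_inv, Equiv.Perm.mul_apply]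

lemma inv_slidePerm_apply_of_forall_ne (p : G.Walk u v) {k : ℕ} (hk : k ≤ p.length)
    (hx : ∀ i ≤ k, p.getVert i ≠ x) : (p.slidePerm k)⁻¹ x = x := by
  induction k with
  | zero => simp
  | succ k ih =>
    rw [p.inv_slidePerm_succ_apply (by omega), ih (by omega) (fun i hi => hx i (by omega)),
      Equiv.swap_apply_of_ne_of_ne (hx k (by omega)).symm (hx (k + 1) le_rfl).symm]

lemma inv_slidePerm_apply_of_notMem (p : G.Walk u v) {k : ℕ} (hk : k ≤ p.length)
    (hx : x ∉ p.support) : (p.slidePerm k)⁻¹ x = x :=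
  p.inv_slidePerm_apply_of_forall_ne hk fun i _ h => hx (h ▸ p.getVert_mem_support i)

lemma IsPath.inv_slidePerm_apply_getVert_of_lt {p : G.Walk u v} (hp : p.IsPath) {i k : ℕ}
    (hki : k < i) (hi : i ≤ p.length) : (p.slidePerm k)⁻¹ (p.getVert i) = p.getVert i :=
  p.inv_slidePerm_apply_of_forall_ne (by omega) fun j hj h =>
    (by omega : j ≠ i) (hp.getVert_injOn (Set.mem_ofPred.mpr (by omega))
      (Set.mem_ofPred.mpr (by omega)) h)

lemma IsPath.inv_slidePerm_apply_getVert {p : G.Walk u v} (hp : p.IsPath) {i k : ℕ}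
    (hi : 1 ≤ i) (hik : i ≤ k) (hk : k ≤ p.length) :
    (p.slidePerm k)⁻¹ (p.getVert i) = p.getVert (i - 1) := by
  have hne {a b : ℕ} (ha : a ≤ p.length) (hb : b ≤ p.length) (hab : a ≠ b) :
      p.getVert a ≠ p.getVert b :=
    fun h => hab (hp.getVert_injOn (Set.mem_ofPred.mpr (by omega))
      (Set.mem_ofPred.mpr (by omega)) h)
  induction k, hik using Nat.le_induction with
  | base =>
    obtain ⟨j, rfl⟩ : ∃ j, i = j + 1 := ⟨i - 1, by omega⟩
    rw [p.inv_slidePerm_succ_apply (by omega), hp.inv_slidePerm_apply_getVert_of_lt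
      (by omega) (by omega), Equiv.swap_apply_right, Nat.add_sub_cancel]
  | succ k hik ih =>
    rw [p.inv_slidePerm_succ_apply (by omega), ih (by omega),
      Equiv.swap_apply_of_ne_of_ne (hne (by omega) (by omega) (by omega))
        (hne (by omega) (by omega) (by omega))]

lemma IsPath.inv_slidePerm_apply_end_of_lt {p : G.Walk u v} (hp : p.IsPath) {k : ℕ}
    (hk : k < p.length) : (p.slidePerm k)⁻¹ v = v := by
  simpa using hp.inv_slidePerm_apply_getVert_of_lt hk le_rfl

lemma IsPath.inv_slidePerm_length_apply_end {p : G.Walk u v} (hp : p.IsPath)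
    (h : 0 < p.length) : (p.slidePerm p.length)⁻¹ v = p.penultimate := by
  simpa using hp.inv_slidePerm_apply_getVert (i := p.length) (by omega) le_rfl le_rfl

lemma IsPath.inv_slidePerm_apply_snd {p : G.Walk u v} (hp : p.IsPath) {k : ℕ} (hk₁ : 1 ≤ k)
    (hk : k ≤ p.length) : (p.slidePerm k)⁻¹ p.snd = u := by
  simpa using hp.inv_slidePerm_apply_getVert le_rfl hk₁ hk

end SimpleGraph.Walk

namespace SimpleGraph

variable {α : Type*} {G : SimpleGraph α}

lemma exists_walk_of_adj_succ (s : ℕ → α) (N : ℕ) (h : ∀ k < N, G.Adj (s k) (s (k + 1))) :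
    ∃ W : G.Walk (s 0) (s N), W.length = N ∧ W.support = (List.range (N + 1)).map s := by
  induction N with
  | zero => exact ⟨.nil, rfl, by simp⟩
  | succ n ih =>
    obtain ⟨W, hlen, hsupp⟩ := ih fun k hk => h k (by omega)
    refine ⟨W.concat (h n (by omega)), by simp [hlen], ?_⟩
    rw [Walk.support_concat, hsupp, List.range_succ (n := n + 1)]
    simp

lemma Walk.isCycle_of_nodup_support_tail {a : α} (W : G.Walk a a) (hW : 3 ≤ W.length)
    (hnd : W.support.tail.Nodup) : W.IsCycle := by
  cases W with
  | nil => simp at hW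
  | cons hadj p =>
    have hp : p.IsPath := by simpa [Walk.isPath_def] using hnd
    refine (cons_isCycle_iff p hadj).mpr ⟨hp, fun he => ?_⟩
    have := hp.length_eq_one_of_mem_edges (Sym2.eq_swap ▸ he)
    simp_all

end SimpleGraph

open SimpleGraph in
theorem exists_isCycle_FS_of_slidePerm {V W : Type*} [DecidableEq V] {X : SimpleGraph V}
    {Y : SimpleGraph W} {c : W} (hc : ∀ y, y ≠ c → Y.Adj c y) {u : V} (σ : V ≃ W)
    (hσ : σ u = c) (R : X.Walk u u) (hR : 3 ≤ R.length)
    (hclosed : R.slidePerm R.length = 1) (hinj : Set.InjOn R.slidePerm (Set.Iio R.length)) :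
    ∃ C : (FS X Y).Walk σ σ, C.IsCycle ∧ C.length = R.length := by
  set L := R.length
  let s : ℕ → V ≃ W := fun k => (R.slidePerm k).trans σ
  have hs_inj {j k : ℕ} (h : s j = s k) : R.slidePerm j = R.slidePerm k := by
    ext x
    simpa [s] using congrArg (fun e : V ≃ W => σ.symm (e x)) h
  have hadj : ∀ k < L, (FS X Y).Adj (s k) (s (k + 1)) := by
    intro k hk
    have hX := R.adj_getVert_succ hk
    have hhole : s k (R.getVert k) = c := by
      simp only [s, Equiv.trans_apply, R.slidePerm_apply_getVert hk.le, hσ]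
    refine ⟨_, _, hX, ?_, ?_, ?_, fun x hx₁ hx₂ => ?_⟩
    · rw [hhole]
      exact hc _ fun h => hX.ne ((s k).injective (hhole.trans h.symm))
    all_goals simp [s, R.slidePerm_succ hk, Equiv.swap_apply_of_ne_of_ne,
      R.slidePerm_apply_getVert hk.le, *]
  obtain ⟨C, hlen, hsupp⟩ := exists_walk_of_adj_succ s L hadj
  refine ⟨C.copy (by ext; simp [s]) (by ext; simp [s, hclosed]),
    Walk.isCycle_of_nodup_support_tail _ (by simpa [hlen]) ?_, by simpa⟩
  rw [Walk.support_copy, hsupp, List.range_succ_eq_map, List.map_cons, List.tail_cons,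
    List.map_map]
  refine List.Nodup.map_on (fun i hi j hj hij => ?_) List.nodup_range
  rw [List.mem_range] at hi hj
  -- the configuration at time `L` is the one at time `0`
  have hle {i j : ℕ} (hi : i < L) (hj : j < L)
      (h : R.slidePerm (i + 1) = R.slidePerm (j + 1)) : i ≤ j := by
    by_contra hji
    rcases (by omega : i + 1 < L ∨ i + 1 = L) with hi' | hi'
    · have := hinj (by simpa using hi') (by simpa using (by omega : j + 1 < L)) h
      omega
    · rw [hi', hclosed, ← R.slidePerm_zero] at h
      have := hinj (by simpa using (by omega : 0 < L)) (by simpa using (by omega : j + 1 < L)) h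
      omega
  have h := hs_inj hij
  exact le_antisymm (hle hi hj h) (hle hj hi h.symm)

namespace SimpleGraph

variable {V : Type*} {X : SimpleGraph V} {v w : V}

structure IsTheta4 (p₁ p₂ p₃ p₄ : X.Walk v w) : Prop where
  length_eq_one : p₁.length = 1
  isPath₁ : p₁.IsPath
  isPath₂ : p₂.IsPath
  isPath₃ : p₃.IsPath
  isPath₄ : p₄.IsPath
  two_le₂ : 2 ≤ p₂.length
  two_le₃ : 2 ≤ p₃.length
  two_le₄ : 2 ≤ p₄.length
  disj₂₃ : ∀ x ∈ p₂.support, x ∈ p₃.support → x = v ∨ x = w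
  disj₂₄ : ∀ x ∈ p₂.support, x ∈ p₄.support → x = v ∨ x = w
  disj₃₄ : ∀ x ∈ p₃.support, x ∈ p₄.support → x = v ∨ x = w

def thetaLoop₁₂₃ (p₁ p₂ p₃ : X.Walk v w) : X.Walk w w :=
  p₂.reverse.append (p₁.append (p₃.reverse.append p₂))

def thetaLoop₁₄ (p₁ p₄ : X.Walk v w) : X.Walk w w :=
  p₁.reverse.append p₄

def thetaRoute (p₁ p₂ p₃ p₄ : X.Walk v w) : X.Walk w w :=
  (thetaLoop₁₂₃ p₁ p₂ p₃).append ((thetaLoop₁₄ p₁ p₄).append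
    ((thetaLoop₁₂₃ p₁ p₂ p₃).reverse.append (thetaLoop₁₄ p₁ p₄).reverse))

/-- The current positions of the tokens that started at `w` (the hole), at `v` and at the
penultimate vertex of `p₂`; along `thetaRoute` they determine the time. -/
def thetaTokens [DecidableEq V] (p₂ : X.Walk v w) (σ : Equiv.Perm V) : V × V × V :=
  (σ⁻¹ w, σ⁻¹ v, σ⁻¹ p₂.penultimate)

lemma reverse_thetaLoop₁₂₃ (p₁ p₂ p₃ : X.Walk v w) : (thetaLoop₁₂₃ p₁ p₂ p₃).reverse =
    p₂.reverse.append (p₃.append (p₁.reverse.append p₂)) := by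
  simp [thetaLoop₁₂₃, Walk.append_assoc]

lemma reverse_thetaLoop₁₄ (p₁ p₄ : X.Walk v w) :
    (thetaLoop₁₄ p₁ p₄).reverse = p₄.reverse.append p₁ := by
  simp [thetaLoop₁₄]

lemma thetaTokens_thetaRoute_of_le [DecidableEq V] {p₁ p₂ p₃ p₄ : X.Walk v w} {k : ℕ}
    (hk : k ≤ (thetaLoop₁₂₃ p₁ p₂ p₃).length) :
    thetaTokens p₂ ((thetaRoute p₁ p₂ p₃ p₄).slidePerm k) =
      thetaTokens p₂ ((thetaLoop₁₂₃ p₁ p₂ p₃).slidePerm k) := by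
  rw [thetaRoute, Walk.slidePerm_append_of_le _ _ hk]

namespace IsTheta4

variable {p₁ p₂ p₃ p₄ : X.Walk v w}

open Walk

lemma support_eq₁ (hθ : IsTheta4 p₁ p₂ p₃ p₄) : p₁.support = [v, w] := by
  have h := hθ.length_eq_one
  cases p₁ with
  | nil => simp at h
  | cons _ p => cases p with
    | nil => rfl
    | cons _ _ => simp at h

lemma ne (hθ : IsTheta4 p₁ p₂ p₃ p₄) : v ≠ w := by
  have := hθ.isPath₂.getVert_ne_start (i := p₂.length) (by have := hθ.two_le₂; omega) le_rfl
  rw [getVert_length] at this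
  exact this.symm

lemma snd₂_ne_start (hθ : IsTheta4 p₁ p₂ p₃ p₄) : p₂.snd ≠ v :=
  hθ.isPath₂.getVert_ne_start one_pos (by have := hθ.two_le₂; omega)

lemma snd₂_ne_end (hθ : IsTheta4 p₁ p₂ p₃ p₄) : p₂.snd ≠ w :=
  hθ.isPath₂.getVert_ne_end (by have := hθ.two_le₂; omega)

lemma penultimate₂_ne_start (hθ : IsTheta4 p₁ p₂ p₃ p₄) : p₂.penultimate ≠ v :=
  hθ.isPath₂.getVert_ne_start (by have := hθ.two_le₂; omega) (by omega)

lemma penultimate₂_ne_end (hθ : IsTheta4 p₁ p₂ p₃ p₄) : p₂.penultimate ≠ w :=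
  hθ.isPath₂.getVert_ne_end (by have := hθ.two_le₂; omega)

lemma snd₃_ne_start (hθ : IsTheta4 p₁ p₂ p₃ p₄) : p₃.snd ≠ v :=
  hθ.isPath₃.getVert_ne_start one_pos (by have := hθ.two_le₃; omega)

lemma snd₃_ne_end (hθ : IsTheta4 p₁ p₂ p₃ p₄) : p₃.snd ≠ w :=
  hθ.isPath₃.getVert_ne_end (by have := hθ.two_le₃; omega)

lemma penultimate₄_ne_start (hθ : IsTheta4 p₁ p₂ p₃ p₄) : p₄.penultimate ≠ v :=
  hθ.isPath₄.getVert_ne_start (by have := hθ.two_le₄; omega) (by omega)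

lemma penultimate₄_ne_end (hθ : IsTheta4 p₁ p₂ p₃ p₄) : p₄.penultimate ≠ w :=
  hθ.isPath₄.getVert_ne_end (by have := hθ.two_le₄; omega)

lemma snd₂_notMem₃ (hθ : IsTheta4 p₁ p₂ p₃ p₄) : p₂.snd ∉ p₃.support :=
  hθ.isPath₂.getVert_notMem_of_disjoint hθ.disj₂₃ one_pos (by have := hθ.two_le₂; omega)

lemma penultimate₂_notMem₄ (hθ : IsTheta4 p₁ p₂ p₃ p₄) : p₂.penultimate ∉ p₄.support :=
  hθ.isPath₂.getVert_notMem_of_disjoint hθ.disj₂₄ (by have := hθ.two_le₂; omega)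
    (by have := hθ.two_le₂; omega)

lemma snd₃_notMem₂ (hθ : IsTheta4 p₁ p₂ p₃ p₄) : p₃.snd ∉ p₂.support :=
  hθ.isPath₃.getVert_notMem_of_disjoint (fun x h₃ h₂ => hθ.disj₂₃ x h₂ h₃) one_pos
    (by have := hθ.two_le₃; omega)

lemma snd₃_notMem₄ (hθ : IsTheta4 p₁ p₂ p₃ p₄) : p₃.snd ∉ p₄.support :=
  hθ.isPath₃.getVert_notMem_of_disjoint hθ.disj₃₄ one_pos (by have := hθ.two_le₃; omega)

lemma penultimate₄_notMem₂ (hθ : IsTheta4 p₁ p₂ p₃ p₄) : p₄.penultimate ∉ p₂.support :=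
  hθ.isPath₄.getVert_notMem_of_disjoint (fun x h₄ h₂ => hθ.disj₂₄ x h₂ h₄)
    (by have := hθ.two_le₄; omega) (by have := hθ.two_le₄; omega)

lemma penultimate₄_notMem₃ (hθ : IsTheta4 p₁ p₂ p₃ p₄) : p₄.penultimate ∉ p₃.support :=
  hθ.isPath₄.getVert_notMem_of_disjoint (fun x h₄ h₃ => hθ.disj₃₄ x h₃ h₄)
    (by have := hθ.two_le₄; omega) (by have := hθ.two_le₄; omega)

lemma snd₂_ne_penultimate₄ (hθ : IsTheta4 p₁ p₂ p₃ p₄) : p₂.snd ≠ p₄.penultimate :=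
  fun h => hθ.penultimate₄_notMem₂ (h ▸ p₂.getVert_mem_support 1)

lemma penultimate₂_ne_snd₃ (hθ : IsTheta4 p₁ p₂ p₃ p₄) : p₂.penultimate ≠ p₃.snd :=
  fun h => hθ.snd₃_notMem₂ (h ▸ p₂.getVert_mem_support _)

lemma length_thetaLoop₁₂₃ (hθ : IsTheta4 p₁ p₂ p₃ p₄) :
    (thetaLoop₁₂₃ p₁ p₂ p₃).length = p₂.length + 1 + p₃.length + p₂.length := by
  simp only [thetaLoop₁₂₃, length_append, length_reverse, hθ.length_eq_one]; omega

lemma length_thetaLoop₁₄ (hθ : IsTheta4 p₁ p₂ p₃ p₄) :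
    (thetaLoop₁₄ p₁ p₄).length = 1 + p₄.length := by
  simp [thetaLoop₁₄, hθ.length_eq_one]

lemma length_thetaRoute (hθ : IsTheta4 p₁ p₂ p₃ p₄) :
    (thetaRoute p₁ p₂ p₃ p₄).length = 4 * p₂.length + 2 * p₃.length + 2 * p₄.length + 4 := by
  simp only [thetaRoute, length_append, length_reverse, hθ.length_thetaLoop₁₂₃,
    hθ.length_thetaLoop₁₄]
  omega

variable [DecidableEq V]

lemma inv_slidePerm₁_apply_of_ne (hθ : IsTheta4 p₁ p₂ p₃ p₄) {x : V} (hv : x ≠ v)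
    (hw : x ≠ w) : (p₁.slidePerm p₁.length)⁻¹ x = x :=
  p₁.inv_slidePerm_apply_of_notMem le_rfl (by simp [hθ.support_eq₁, hv, hw])

lemma inv_slidePerm₁_reverse_apply_of_ne (hθ : IsTheta4 p₁ p₂ p₃ p₄) {x : V} (hv : x ≠ v)
    (hw : x ≠ w) : (p₁.reverse.slidePerm p₁.reverse.length)⁻¹ x = x :=
  p₁.reverse.inv_slidePerm_apply_of_notMem le_rfl (by simp [hθ.support_eq₁, hv, hw])

lemma inv_slidePerm₁_apply_end (hθ : IsTheta4 p₁ p₂ p₃ p₄) :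
    (p₁.slidePerm p₁.length)⁻¹ w = v := by
  rw [hθ.isPath₁.inv_slidePerm_length_apply_end (by simp [hθ.length_eq_one]), penultimate,
    hθ.length_eq_one, Nat.sub_self, getVert_zero]

lemma inv_slidePerm₁_reverse_apply_end (hθ : IsTheta4 p₁ p₂ p₃ p₄) :
    (p₁.reverse.slidePerm p₁.reverse.length)⁻¹ v = w := by
  rw [hθ.isPath₁.reverse.inv_slidePerm_length_apply_end (by simp [hθ.length_eq_one]),
    penultimate_reverse, snd, ← hθ.length_eq_one, getVert_length]

lemma inv_slidePerm₂_reverse_length_apply (hθ : IsTheta4 p₁ p₂ p₃ p₄) :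
    let σ := p₂.reverse.slidePerm p₂.reverse.length
    σ⁻¹ w = v ∧ σ⁻¹ v = p₂.snd ∧ σ⁻¹ p₂.penultimate = w := by
  have h₂ := hθ.isPath₂.reverse
  have hl : 0 < p₂.reverse.length := by rw [length_reverse]; have := hθ.two_le₂; omega
  refine ⟨inv_slidePerm_length_apply_start _, ?_, ?_⟩
  · rw [h₂.inv_slidePerm_length_apply_end hl, penultimate_reverse]
  · rw [← snd_reverse, h₂.inv_slidePerm_apply_snd hl le_rfl]

lemma inv_slidePerm_thetaLoop₁₂₃_along_p₂_reverse (hθ : IsTheta4 p₁ p₂ p₃ p₄) {s : ℕ}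
    (hs₀ : 1 ≤ s) (hs : s ≤ p₂.length) :
    let σ := (thetaLoop₁₂₃ p₁ p₂ p₃).slidePerm s
    (σ⁻¹ w, σ⁻¹ v, σ⁻¹ p₂.penultimate) =
      (p₂.getVert (p₂.length - s), if s < p₂.length then v else p₂.snd, w) := by
  have h₂ := hθ.isPath₂.reverse
  have hs' : s ≤ p₂.reverse.length := by simpa using hs
  simp only [thetaLoop₁₂₃, slidePerm_append_of_le _ _ hs']
  rw [inv_slidePerm_apply_start _ hs', getVert_reverse, ← snd_reverse,
    h₂.inv_slidePerm_apply_snd hs₀ hs']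
  split_ifs with h
  · rw [h₂.inv_slidePerm_apply_end_of_lt (by simpa using h)]
  · rw [show s = p₂.reverse.length by rw [length_reverse]; omega]
    rw [hθ.inv_slidePerm₂_reverse_length_apply.2.1]

lemma inv_slidePerm_thetaLoop₁₂₃_along_p₃_reverse (hθ : IsTheta4 p₁ p₂ p₃ p₄) {s : ℕ}
    (hs : s ≤ p₃.length) :
    let σ := (thetaLoop₁₂₃ p₁ p₂ p₃).slidePerm (p₂.length + 1 + s)
    (σ⁻¹ w, σ⁻¹ v, σ⁻¹ p₂.penultimate) =
      (p₃.getVert (p₃.length - s), p₂.snd, if s < p₃.length then v else p₃.snd) := by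
  obtain ⟨h₂w, h₂v, h₂y⟩ := hθ.inv_slidePerm₂_reverse_length_apply
  have h₃ := hθ.isPath₃.reverse
  rw [show p₂.length + 1 + s = p₂.reverse.length + (p₁.length + s) by
    simp only [length_reverse, hθ.length_eq_one]; omega]
  simp only [thetaLoop₁₂₃, inv_slidePerm_append_length_add_apply,
    slidePerm_append_of_le _ _ (by simpa using hs : s ≤ p₃.reverse.length), h₂w, h₂v, h₂y,
    inv_slidePerm_length_apply_start, hθ.inv_slidePerm₁_apply_end,
    hθ.inv_slidePerm₁_apply_of_ne hθ.snd₂_ne_start hθ.snd₂_ne_end,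
    inv_slidePerm_apply_start _ (by simpa using hs : s ≤ p₃.reverse.length), getVert_reverse,
    p₃.reverse.inv_slidePerm_apply_of_notMem (by simpa using hs : s ≤ p₃.reverse.length)
      (by simpa using hθ.snd₂_notMem₃)]
  split_ifs with h
  · rw [h₃.inv_slidePerm_apply_end_of_lt (by simpa using h)]
  · rw [show s = p₃.reverse.length by rw [length_reverse]; omega,
      h₃.inv_slidePerm_length_apply_end (by rw [length_reverse]; have := hθ.two_le₃; omega),
      penultimate_reverse]

lemma inv_slidePerm_thetaLoop₁₂₃_prefix (hθ : IsTheta4 p₁ p₂ p₃ p₄) :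
    let τ := fun x => (p₃.reverse.slidePerm p₃.reverse.length)⁻¹
      ((p₁.slidePerm p₁.length)⁻¹ ((p₂.reverse.slidePerm p₂.reverse.length)⁻¹ x))
    τ w = v ∧ τ v = p₂.snd ∧ τ p₂.penultimate = p₃.snd := by
  have h := hθ.inv_slidePerm_thetaLoop₁₂₃_along_p₃_reverse le_rfl
  rw [show p₂.length + 1 + p₃.length = p₂.reverse.length + (p₁.length + p₃.reverse.length) by
    simp only [length_reverse, hθ.length_eq_one]; omega] at h
  simp only [thetaLoop₁₂₃, inv_slidePerm_append_length_add_apply,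
    slidePerm_append_of_le _ _ le_rfl, Nat.sub_self, getVert_zero, lt_irrefl, if_false,
    Prod.mk.injEq] at h
  exact h

lemma inv_slidePerm_thetaLoop₁₂₃_along_p₂ (hθ : IsTheta4 p₁ p₂ p₃ p₄) {s : ℕ}
    (hs : s ≤ p₂.length) :
    let σ := (thetaLoop₁₂₃ p₁ p₂ p₃).slidePerm (p₂.length + 1 + p₃.length + s)
    (σ⁻¹ w, σ⁻¹ v, σ⁻¹ p₂.penultimate) =
      (p₂.getVert s, if s = 0 then p₂.snd else v, p₃.snd) := by
  obtain ⟨hw, hv, hy⟩ := hθ.inv_slidePerm_thetaLoop₁₂₃_prefix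
  rw [show p₂.length + 1 + p₃.length + s =
      p₂.reverse.length + (p₁.length + (p₃.reverse.length + s)) by
    simp only [length_reverse, hθ.length_eq_one]; omega]
  simp only [thetaLoop₁₂₃, inv_slidePerm_append_length_add_apply] at hw hv hy ⊢
  rw [hw, hv, hy, inv_slidePerm_apply_start _ hs,
    p₂.inv_slidePerm_apply_of_notMem hs hθ.snd₃_notMem₂]
  split_ifs with h
  · simp [h]
  · rw [hθ.isPath₂.inv_slidePerm_apply_snd (by omega) hs]

lemma inv_slidePerm_thetaLoop₁₄_along_p₄ (hθ : IsTheta4 p₁ p₂ p₃ p₄) {s : ℕ}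
    (hs : s ≤ p₄.length) :
    let σ := (thetaLoop₁₄ p₁ p₄).slidePerm (1 + s)
    (σ⁻¹ w, σ⁻¹ v, σ⁻¹ p₃.snd) =
      (p₄.getVert s, if s < p₄.length then w else p₄.penultimate, p₃.snd) := by
  rw [show 1 + s = p₁.reverse.length + s by simp [hθ.length_eq_one]]
  simp only [thetaLoop₁₄, inv_slidePerm_append_length_add_apply,
    inv_slidePerm_length_apply_start, hθ.inv_slidePerm₁_reverse_apply_end,
    hθ.inv_slidePerm₁_reverse_apply_of_ne hθ.snd₃_ne_start hθ.snd₃_ne_end,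
    inv_slidePerm_apply_start _ hs, p₄.inv_slidePerm_apply_of_notMem hs hθ.snd₃_notMem₄]
  split_ifs with h
  · rw [hθ.isPath₄.inv_slidePerm_apply_end_of_lt h]
  · rw [show s = p₄.length by omega,
      hθ.isPath₄.inv_slidePerm_length_apply_end (by have := hθ.two_le₄; omega)]

lemma inv_slidePerm_reverse_thetaLoop₁₂₃_along_p₂_reverse (hθ : IsTheta4 p₁ p₂ p₃ p₄)
    {s : ℕ} (hs : s ≤ p₂.length) :
    let σ := (thetaLoop₁₂₃ p₁ p₂ p₃).reverse.slidePerm s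
    (σ⁻¹ w, σ⁻¹ p₄.penultimate, σ⁻¹ p₃.snd) =
      (p₂.getVert (p₂.length - s), p₄.penultimate, p₃.snd) := by
  have hs' : s ≤ p₂.reverse.length := by simpa using hs
  simp only [reverse_thetaLoop₁₂₃ p₁ p₂ p₃, slidePerm_append_of_le _ _ hs',
    inv_slidePerm_apply_start _ hs', getVert_reverse,
    p₂.reverse.inv_slidePerm_apply_of_notMem hs' (by simpa using hθ.penultimate₄_notMem₂),
    p₂.reverse.inv_slidePerm_apply_of_notMem hs' (by simpa using hθ.snd₃_notMem₂)]

lemma inv_slidePerm_reverse_thetaLoop₁₂₃_along_p₃ (hθ : IsTheta4 p₁ p₂ p₃ p₄) {s : ℕ}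
    (hs : s ≤ p₃.length) :
    let σ := (thetaLoop₁₂₃ p₁ p₂ p₃).reverse.slidePerm (p₂.length + s)
    (σ⁻¹ w, σ⁻¹ p₄.penultimate, σ⁻¹ p₃.snd) =
      (p₃.getVert s, p₄.penultimate, if s = 0 then p₃.snd else v) := by
  rw [show p₂.length + s = p₂.reverse.length + s by simp]
  simp only [reverse_thetaLoop₁₂₃ p₁ p₂ p₃, inv_slidePerm_append_length_add_apply,
    slidePerm_append_of_le _ _ hs, inv_slidePerm_length_apply_start,
    p₂.reverse.inv_slidePerm_apply_of_notMem le_rfl (by simpa using hθ.penultimate₄_notMem₂),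
    p₂.reverse.inv_slidePerm_apply_of_notMem le_rfl (by simpa using hθ.snd₃_notMem₂),
    inv_slidePerm_apply_start _ hs, p₃.inv_slidePerm_apply_of_notMem hs hθ.penultimate₄_notMem₃]
  split_ifs with h0
  · simp [h0]
  · rw [hθ.isPath₃.inv_slidePerm_apply_snd (by omega) hs]

lemma inv_slidePerm_reverse_thetaLoop₁₂₃_along_p₂ (hθ : IsTheta4 p₁ p₂ p₃ p₄) {s : ℕ}
    (hs : s ≤ p₂.length) :
    let σ := (thetaLoop₁₂₃ p₁ p₂ p₃).reverse.slidePerm (p₂.length + p₃.length + 1 + s)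
    (σ⁻¹ w, σ⁻¹ p₄.penultimate, σ⁻¹ p₃.snd) =
      (p₂.getVert s, p₄.penultimate, if s < p₂.length then w else p₂.penultimate) := by
  rw [show p₂.length + p₃.length + 1 + s =
      p₂.reverse.length + (p₃.length + (p₁.reverse.length + s)) by
    simp only [length_reverse, hθ.length_eq_one]; omega]
  have hd : p₄.penultimate ∉ p₂.support := hθ.penultimate₄_notMem₂
  simp only [reverse_thetaLoop₁₂₃ p₁ p₂ p₃, inv_slidePerm_append_length_add_apply,
    inv_slidePerm_length_apply_start, hθ.inv_slidePerm₁_reverse_apply_end,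
    p₂.reverse.inv_slidePerm_apply_of_notMem le_rfl (by simpa using hd),
    p₂.reverse.inv_slidePerm_apply_of_notMem le_rfl (by simpa using hθ.snd₃_notMem₂),
    p₃.inv_slidePerm_apply_of_notMem le_rfl hθ.penultimate₄_notMem₃,
    hθ.isPath₃.inv_slidePerm_apply_snd (by have := hθ.two_le₃; omega) le_rfl,
    hθ.inv_slidePerm₁_reverse_apply_of_ne hθ.penultimate₄_ne_start hθ.penultimate₄_ne_end,
    inv_slidePerm_apply_start _ hs, p₂.inv_slidePerm_apply_of_notMem hs hd]
  split_ifs with h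
  · rw [hθ.isPath₂.inv_slidePerm_apply_end_of_lt h]
  · rw [show s = p₂.length by omega,
      hθ.isPath₂.inv_slidePerm_length_apply_end (by have := hθ.two_le₂; omega)]

lemma inv_slidePerm_reverse_thetaLoop₁₄_along_p₄_reverse (hθ : IsTheta4 p₁ p₂ p₃ p₄) {s : ℕ}
    (hs : s ≤ p₄.length) :
    let σ := (thetaLoop₁₄ p₁ p₄).reverse.slidePerm s
    (σ⁻¹ w, σ⁻¹ p₄.penultimate, σ⁻¹ p₂.penultimate) =
      (p₄.getVert (p₄.length - s), if s = 0 then p₄.penultimate else w, p₂.penultimate) := by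
  have hs' : s ≤ p₄.reverse.length := by simpa using hs
  simp only [reverse_thetaLoop₁₄ p₁ p₄, slidePerm_append_of_le _ _ hs',
    inv_slidePerm_apply_start _ hs', getVert_reverse,
    p₄.reverse.inv_slidePerm_apply_of_notMem hs' (by simpa using hθ.penultimate₂_notMem₄)]
  split_ifs with h0
  · simp [h0]
  · rw [← snd_reverse, hθ.isPath₄.reverse.inv_slidePerm_apply_snd (by omega) hs']

lemma inv_slidePerm_thetaLoop₁₂₃_length (hθ : IsTheta4 p₁ p₂ p₃ p₄) :
    let σ := (thetaLoop₁₂₃ p₁ p₂ p₃).slidePerm (thetaLoop₁₂₃ p₁ p₂ p₃).length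
    σ⁻¹ w = w ∧ σ⁻¹ v = v ∧ σ⁻¹ p₂.penultimate = p₃.snd := by
  have h := hθ.inv_slidePerm_thetaLoop₁₂₃_along_p₂ le_rfl
  simp only [getVert_length, if_neg (by have := hθ.two_le₂; omega : p₂.length ≠ 0),
    Prod.mk.injEq, ← hθ.length_thetaLoop₁₂₃] at h
  exact h

lemma inv_slidePerm_thetaLoop₁₄_length (hθ : IsTheta4 p₁ p₂ p₃ p₄) :
    let σ := (thetaLoop₁₄ p₁ p₄).slidePerm (thetaLoop₁₄ p₁ p₄).length
    σ⁻¹ w = w ∧ σ⁻¹ v = p₄.penultimate ∧ σ⁻¹ p₃.snd = p₃.snd := by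
  have h := hθ.inv_slidePerm_thetaLoop₁₄_along_p₄ le_rfl
  simp only [getVert_length, lt_irrefl, if_false, Prod.mk.injEq,
    ← hθ.length_thetaLoop₁₄] at h
  exact h

lemma inv_slidePerm_reverse_thetaLoop₁₂₃_length (hθ : IsTheta4 p₁ p₂ p₃ p₄) :
    let σ := (thetaLoop₁₂₃ p₁ p₂ p₃).reverse.slidePerm (thetaLoop₁₂₃ p₁ p₂ p₃).reverse.length
    σ⁻¹ w = w ∧ σ⁻¹ p₄.penultimate = p₄.penultimate ∧ σ⁻¹ p₃.snd = p₂.penultimate := by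
  have h := hθ.inv_slidePerm_reverse_thetaLoop₁₂₃_along_p₂ le_rfl
  simp only [getVert_length, lt_irrefl, if_false, Prod.mk.injEq] at h
  rw [length_reverse, hθ.length_thetaLoop₁₂₃,
    show p₂.length + 1 + p₃.length + p₂.length = p₂.length + p₃.length + 1 + p₂.length by omega]
  exact h

lemma commute_slidePerm_thetaLoop₁₂₃_thetaLoop₁₄ (hθ : IsTheta4 p₁ p₂ p₃ p₄) :
    Commute ((thetaLoop₁₂₃ p₁ p₂ p₃).slidePerm (thetaLoop₁₂₃ p₁ p₂ p₃).length)
      ((thetaLoop₁₄ p₁ p₄).slidePerm (thetaLoop₁₄ p₁ p₄).length) := by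
  refine Commute.inv_inv_iff.mp (Equiv.Perm.Disjoint.commute fun x => ?_)
  by_cases hx : x ∈ p₄.support
  · by_cases hv : x = v
    · exact .inl (hv ▸ hθ.inv_slidePerm_thetaLoop₁₂₃_length.2.1)
    by_cases hw : x = w
    · exact .inr (hw ▸ hθ.inv_slidePerm_thetaLoop₁₄_length.1)
    have h₂ : x ∉ p₂.support := fun h => by rcases hθ.disj₂₄ x h hx with h | h <;> contradiction
    have h₃ : x ∉ p₃.support := fun h => by rcases hθ.disj₃₄ x h hx with h | h <;> contradiction
    refine .inl (inv_slidePerm_apply_of_notMem _ le_rfl ?_)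
    simp [thetaLoop₁₂₃, mem_support_append_iff, hθ.support_eq₁, h₂, h₃, hv, hw]
  · refine .inr (inv_slidePerm_apply_of_notMem _ le_rfl ?_)
    have hv : x ≠ v := fun h => hx (h ▸ p₄.start_mem_support)
    have hw : x ≠ w := fun h => hx (h ▸ p₄.end_mem_support)
    simp [thetaLoop₁₄, mem_support_append_iff, hθ.support_eq₁, hx, hv, hw]

lemma slidePerm_thetaRoute_length (hθ : IsTheta4 p₁ p₂ p₃ p₄) :
    (thetaRoute p₁ p₂ p₃ p₄).slidePerm (thetaRoute p₁ p₂ p₃ p₄).length = 1 := by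
  simp only [thetaRoute, slidePerm_length_append, slidePerm_reverse]
  rw [← mul_assoc, hθ.commute_slidePerm_thetaLoop₁₂₃_thetaLoop₁₄.eq, mul_assoc, mul_inv_cancel_left,
    mul_inv_cancel]

lemma thetaTokens_thetaRoute_loop₁₄ (hθ : IsTheta4 p₁ p₂ p₃ p₄) {k : ℕ}
    (hk : k ≤ (thetaLoop₁₄ p₁ p₄).length) :
    let σ := (thetaLoop₁₄ p₁ p₄).slidePerm k
    thetaTokens p₂ ((thetaRoute p₁ p₂ p₃ p₄).slidePerm ((thetaLoop₁₂₃ p₁ p₂ p₃).length + k)) =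
      (σ⁻¹ w, σ⁻¹ v, σ⁻¹ p₃.snd) := by
  obtain ⟨hw, hv, hy⟩ := hθ.inv_slidePerm_thetaLoop₁₂₃_length
  simp only [thetaTokens, thetaRoute, inv_slidePerm_append_length_add_apply, hw, hv, hy,
    slidePerm_append_of_le _ _ hk]

lemma thetaTokens_thetaRoute_reverse_loop₁₂₃ (hθ : IsTheta4 p₁ p₂ p₃ p₄) {k : ℕ}
    (hk : k ≤ (thetaLoop₁₂₃ p₁ p₂ p₃).reverse.length) :
    let σ := (thetaLoop₁₂₃ p₁ p₂ p₃).reverse.slidePerm k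
    thetaTokens p₂ ((thetaRoute p₁ p₂ p₃ p₄).slidePerm ((thetaLoop₁₂₃ p₁ p₂ p₃).length +
      ((thetaLoop₁₄ p₁ p₄).length + k))) = (σ⁻¹ w, σ⁻¹ p₄.penultimate, σ⁻¹ p₃.snd) := by
  obtain ⟨hw, hv, hy⟩ := hθ.inv_slidePerm_thetaLoop₁₂₃_length
  obtain ⟨hw', hv', hy'⟩ := hθ.inv_slidePerm_thetaLoop₁₄_length
  simp only [thetaTokens, thetaRoute, inv_slidePerm_append_length_add_apply, hw, hv, hy, hw', hv',
    hy', slidePerm_append_of_le _ _ hk]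

lemma thetaTokens_thetaRoute_reverse_loop₁₄ (hθ : IsTheta4 p₁ p₂ p₃ p₄) (k : ℕ) :
    let σ := (thetaLoop₁₄ p₁ p₄).reverse.slidePerm k
    thetaTokens p₂ ((thetaRoute p₁ p₂ p₃ p₄).slidePerm ((thetaLoop₁₂₃ p₁ p₂ p₃).length +
      ((thetaLoop₁₄ p₁ p₄).length + ((thetaLoop₁₂₃ p₁ p₂ p₃).reverse.length + k)))) =
      (σ⁻¹ w, σ⁻¹ p₄.penultimate, σ⁻¹ p₂.penultimate) := by
  obtain ⟨hw, hv, hy⟩ := hθ.inv_slidePerm_thetaLoop₁₂₃_length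
  obtain ⟨hw', hv', hy'⟩ := hθ.inv_slidePerm_thetaLoop₁₄_length
  obtain ⟨hw'', hv'', hy''⟩ := hθ.inv_slidePerm_reverse_thetaLoop₁₂₃_length
  simp only [thetaTokens, thetaRoute, inv_slidePerm_append_length_add_apply, hw, hv, hy, hw', hv',
    hy', hw'', hv'', hy'']

lemma thetaTokens_thetaRoute_cases_of_le (hθ : IsTheta4 p₁ p₂ p₃ p₄) {k : ℕ}
    (hk : k ≤ 2 * p₂.length + p₃.length + 1) :
    let a := p₂.length; let b := p₃.length
    let T := thetaTokens p₂ ((thetaRoute p₁ p₂ p₃ p₄).slidePerm k)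
    (k = 0 ∧ T = (w, v, p₂.penultimate)) ∨
    (1 ≤ k ∧ k < a ∧ T = (p₂.getVert (a - k), v, w)) ∨
    (k = a ∧ T = (v, p₂.snd, w)) ∨
    (∃ s < b, k = a + 1 + s ∧ T = (p₃.getVert (b - s), p₂.snd, v)) ∨
    (k = a + 1 + b ∧ T = (v, p₂.snd, p₃.snd)) ∨
    (∃ s, 1 ≤ s ∧ s ≤ a ∧ k = a + 1 + b + s ∧ T = (p₂.getVert s, v, p₃.snd)) := by
  intro a b T
  have ha := hθ.two_le₂
  rw [show T = thetaTokens p₂ ((thetaLoop₁₂₃ p₁ p₂ p₃).slidePerm k) from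
    thetaTokens_thetaRoute_of_le (by rw [hθ.length_thetaLoop₁₂₃]; omega)]
  rcases (by omega : k = 0 ∨ (1 ≤ k ∧ k < a) ∨ k = a ∨ (a + 1 ≤ k ∧ k < a + 1 + b) ∨
    k = a + 1 + b ∨ a + 1 + b < k) with h | h | h | h | h | h
  · subst h
    exact .inl ⟨rfl, by simp [thetaTokens]⟩
  · have := hθ.inv_slidePerm_thetaLoop₁₂₃_along_p₂_reverse h.1 h.2.le
    rw [if_pos h.2] at this
    exact .inr <| .inl ⟨h.1, h.2, this⟩
  · subst h
    have := hθ.inv_slidePerm_thetaLoop₁₂₃_along_p₂_reverse (s := a) (by omega) le_rfl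
    rw [if_neg (lt_irrefl _), Nat.sub_self, getVert_zero] at this
    exact .inr <| .inr <| .inl ⟨rfl, this⟩
  · obtain ⟨s, rfl⟩ : ∃ s, k = a + 1 + s := ⟨k - (a + 1), by omega⟩
    have := hθ.inv_slidePerm_thetaLoop₁₂₃_along_p₃_reverse (s := s) (by omega)
    rw [if_pos (by omega)] at this
    exact .inr <| .inr <| .inr <| .inl ⟨s, by omega, rfl, this⟩
  · subst h
    have := hθ.inv_slidePerm_thetaLoop₁₂₃_along_p₃_reverse (s := b) le_rfl
    rw [if_neg (lt_irrefl _), Nat.sub_self, getVert_zero] at this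
    exact .inr <| .inr <| .inr <| .inr <| .inl ⟨rfl, this⟩
  · obtain ⟨s, rfl⟩ : ∃ s, k = a + 1 + b + s := ⟨k - (a + 1 + b), by omega⟩
    have := hθ.inv_slidePerm_thetaLoop₁₂₃_along_p₂ (s := s) (by omega)
    rw [if_neg (by omega)] at this
    exact .inr <| .inr <| .inr <| .inr <| .inr ⟨s, by omega, by omega, rfl, this⟩

lemma thetaTokens_thetaRoute_cases_of_lt (hθ : IsTheta4 p₁ p₂ p₃ p₄) {k : ℕ}
    (hk₀ : 2 * p₂.length + p₃.length + 1 < k) (hk : k < (thetaRoute p₁ p₂ p₃ p₄).length) :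
    let a := p₂.length; let b := p₃.length; let c := p₄.length
    let T := thetaTokens p₂ ((thetaRoute p₁ p₂ p₃ p₄).slidePerm k)
    (∃ s < c, k = 2 * a + b + 2 + s ∧ T = (p₄.getVert s, w, p₃.snd)) ∨
    (∃ s ≤ a, k = 2 * a + b + c + 2 + s ∧ T = (p₂.getVert (a - s), p₄.penultimate, p₃.snd)) ∨
    (∃ s, 1 ≤ s ∧ s ≤ b ∧ k = 3 * a + b + c + 2 + s ∧ T = (p₃.getVert s, p₄.penultimate, v)) ∨
    (∃ s < a, k = 3 * a + 2 * b + c + 3 + s ∧ T = (p₂.getVert s, p₄.penultimate, w)) ∨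
    (k = 4 * a + 2 * b + c + 3 ∧ T = (w, p₄.penultimate, p₂.penultimate)) ∨
    (∃ s, 1 ≤ s ∧ s ≤ c ∧ k = 4 * a + 2 * b + c + 3 + s ∧
      T = (p₄.getVert (c - s), w, p₂.penultimate)) := by
  intro a b c T
  have ha := hθ.two_le₂
  have hδ := hθ.length_thetaLoop₁₂₃
  have hγ := hθ.length_thetaLoop₁₄
  have hδ' : (thetaLoop₁₂₃ p₁ p₂ p₃).reverse.length = a + b + 1 + a := by
    rw [length_reverse, hδ]; omega
  rw [hθ.length_thetaRoute] at hk
  by_cases h₁ : k < a + 1 + b + a + (1 + c)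
  · obtain ⟨s, rfl⟩ : ∃ s, k = (thetaLoop₁₂₃ p₁ p₂ p₃).length + (1 + s) :=
      ⟨k - (a + 1 + b + a + 1), by omega⟩
    have := (hθ.thetaTokens_thetaRoute_loop₁₄ (by omega)).trans
      (hθ.inv_slidePerm_thetaLoop₁₄_along_p₄ (s := s) (by omega))
    rw [if_pos (by omega)] at this
    exact .inl ⟨s, by omega, by omega, this⟩
  refine .inr ?_
  by_cases h₂ : k ≤ a + 1 + b + a + (1 + c) + (a + b + 1 + a)
  · obtain ⟨t, rfl⟩ : ∃ t, k = (thetaLoop₁₂₃ p₁ p₂ p₃).length +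
        ((thetaLoop₁₄ p₁ p₄).length + t) := ⟨k - (a + 1 + b + a + (1 + c)), by omega⟩
    have hT := hθ.thetaTokens_thetaRoute_reverse_loop₁₂₃ (k := t) (by omega)
    rcases (by omega : t ≤ a ∨ (a < t ∧ t ≤ a + b) ∨ (a + b < t ∧ t < a + b + 1 + a) ∨
      t = a + b + 1 + a) with h | h | h | h
    · exact .inl ⟨t, h, by omega,
        hT.trans (hθ.inv_slidePerm_reverse_thetaLoop₁₂₃_along_p₂_reverse h)⟩
    · obtain ⟨s, rfl⟩ : ∃ s, t = a + s := ⟨t - a, by omega⟩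
      have := hT.trans (hθ.inv_slidePerm_reverse_thetaLoop₁₂₃_along_p₃ (s := s) (by omega))
      rw [if_neg (by omega)] at this
      exact .inr <| .inl ⟨s, by omega, by omega, by omega, this⟩
    · obtain ⟨s, rfl⟩ : ∃ s, t = a + b + 1 + s := ⟨t - (a + b + 1), by omega⟩
      have := hT.trans (hθ.inv_slidePerm_reverse_thetaLoop₁₂₃_along_p₂ (s := s) (by omega))
      rw [if_pos (by omega)] at this
      exact .inr <| .inr <| .inl ⟨s, by omega, by omega, this⟩
    · subst h
      have := hT.trans (hθ.inv_slidePerm_reverse_thetaLoop₁₂₃_along_p₂ (s := a) le_rfl)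
      rw [if_neg (lt_irrefl _), getVert_length] at this
      exact .inr <| .inr <| .inr <| .inl ⟨by omega, this⟩
  · obtain ⟨s, rfl⟩ : ∃ s, k = (thetaLoop₁₂₃ p₁ p₂ p₃).length + ((thetaLoop₁₄ p₁ p₄).length +
        ((thetaLoop₁₂₃ p₁ p₂ p₃).reverse.length + s)) :=
      ⟨k - (a + 1 + b + a + (1 + c) + (a + b + 1 + a)), by omega⟩
    have := (hθ.thetaTokens_thetaRoute_reverse_loop₁₄ s).trans
      (hθ.inv_slidePerm_reverse_thetaLoop₁₄_along_p₄_reverse (s := s) (by omega))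
    rw [if_neg (by omega)] at this
    exact .inr <| .inr <| .inr <| .inr ⟨s, by omega, by omega, by omega, this⟩

lemma injOn_slidePerm_thetaRoute (hθ : IsTheta4 p₁ p₂ p₃ p₄) :
    Set.InjOn (thetaRoute p₁ p₂ p₃ p₄).slidePerm
      (Set.Iio (thetaRoute p₁ p₂ p₃ p₄).length) := by
  intro j hj k hk hjk
  have hT : thetaTokens p₂ ((thetaRoute p₁ p₂ p₃ p₄).slidePerm j) =
      thetaTokens p₂ ((thetaRoute p₁ p₂ p₃ p₄).slidePerm k) := by rw [hjk]
  have := hθ.two_le₂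
  have := hθ.two_le₃
  have := hθ.two_le₄
  have cases := fun {i : ℕ} (hi : i < (thetaRoute p₁ p₂ p₃ p₄).length) =>
    (le_or_gt i _).imp hθ.thetaTokens_thetaRoute_cases_of_le
      (hθ.thetaTokens_thetaRoute_cases_of_lt · hi)
  rcases cases hj with
      (⟨rfl, e⟩ | ⟨_, _, e⟩ | ⟨rfl, e⟩ | ⟨s, _, rfl, e⟩ | ⟨rfl, e⟩ | ⟨s, _, _, rfl, e⟩) |
      (⟨s, _, rfl, e⟩ | ⟨s, _, rfl, e⟩ | ⟨s, _, _, rfl, e⟩ | ⟨s, _, rfl, e⟩ | ⟨rfl, e⟩ |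
        ⟨s, _, _, rfl, e⟩) <;>
    rcases cases hk with
      (⟨rfl, e'⟩ | ⟨_, _, e'⟩ | ⟨rfl, e'⟩ | ⟨s', _, rfl, e'⟩ | ⟨rfl, e'⟩ | ⟨s', _, _, rfl, e'⟩) |
      (⟨s', _, rfl, e'⟩ | ⟨s', _, rfl, e'⟩ | ⟨s', _, _, rfl, e'⟩ | ⟨s', _, rfl, e'⟩ | ⟨rfl, e'⟩ |
        ⟨s', _, _, rfl, e'⟩) <;>
    first
    | rfl
    | rw [e, e'] at hT
      -- different phases are told apart by the two tokens, equal phases by the hole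
      simp only [Prod.mk.injEq, hθ.ne, hθ.ne.symm, hθ.snd₂_ne_start, hθ.snd₂_ne_start.symm,
        hθ.snd₂_ne_end, hθ.snd₂_ne_end.symm, hθ.penultimate₄_ne_start,
        hθ.penultimate₄_ne_start.symm, hθ.penultimate₄_ne_end, hθ.penultimate₄_ne_end.symm,
        hθ.snd₂_ne_penultimate₄, hθ.snd₂_ne_penultimate₄.symm, hθ.penultimate₂_ne_start,
        hθ.penultimate₂_ne_start.symm, hθ.penultimate₂_ne_end, hθ.penultimate₂_ne_end.symm,
        hθ.penultimate₂_ne_snd₃, hθ.penultimate₂_ne_snd₃.symm, hθ.snd₃_ne_start,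
        hθ.snd₃_ne_start.symm, hθ.snd₃_ne_end, hθ.snd₃_ne_end.symm, and_false, and_true] at hT
      all_goals first
      | omega
      | (have := hθ.isPath₂.getVert_injOn (Set.mem_ofPred.mpr (by omega))
          (Set.mem_ofPred.mpr (by omega)) hT; omega)
      | (have := hθ.isPath₃.getVert_injOn (Set.mem_ofPred.mpr (by omega))
          (Set.mem_ofPred.mpr (by omega)) hT; omega)
      | (have := hθ.isPath₄.getVert_injOn (Set.mem_ofPred.mpr (by omega))
          (Set.mem_ofPred.mpr (by omega)) hT; omega)

end IsTheta4

end SimpleGraph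

theorem SimpleGraph.IsTheta4.exists_isCycle_FS_starGraphFin {V : Type*} [Fintype V]
    [DecidableEq V] {n : ℕ} (hV : Fintype.card V = n) {X : SimpleGraph V} {v w : V}
    {p₁ p₂ p₃ p₄ : X.Walk v w} (hθ : IsTheta4 p₁ p₂ p₃ p₄) :
    ∃ (σ : V ≃ Fin n) (C : (FS X (starGraphFin n)).Walk σ σ),
      C.IsCycle ∧ C.length = (thetaRoute p₁ p₂ p₃ p₄).length := by
  have hn : 0 < n := hV ▸ Fintype.card_pos_iff.mpr ⟨v⟩
  let center : Fin n := ⟨n - 1, by omega⟩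
  let e := Fintype.equivFinOfCardEq hV
  have hcenter : ∀ y, y ≠ center → (starGraphFin n).Adj center y :=
    fun y hy => ⟨hy.symm, .inl rfl⟩
  exact ⟨_, exists_isCycle_FS_of_slidePerm hcenter (e.trans (Equiv.swap (e w) center))
    (by simp) _ (by rw [hθ.length_thetaRoute]; omega) hθ.slidePerm_thetaRoute_length
    hθ.injOn_slidePerm_thetaRoute⟩

theorem stmt18_general {V : Type} [Fintype V] (n : ℕ) (hV : Fintype.card V = n)
    (X : SimpleGraph V) (v w : V)
    (p₁ p₂ p₃ p₄ : X.Walk v w)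
    (h₁ : p₁.IsPath) (h₂ : p₂.IsPath) (h₃ : p₃.IsPath) (h₄ : p₄.IsPath)
    (hd₂₃ : ∀ x : V, x ∈ p₂.support → x ∈ p₃.support → x = v ∨ x = w)
    (hd₂₄ : ∀ x : V, x ∈ p₂.support → x ∈ p₄.support → x = v ∨ x = w)
    (hd₃₄ : ∀ x : V, x ∈ p₃.support → x ∈ p₄.support → x = v ∨ x = w)
    (hl₁ : p₁.length = 1) (hl₂ : 1 < p₂.length)
    (hl₂₃ : p₂.length ≤ p₃.length) (hl₃₄ : p₃.length ≤ p₄.length) :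
    (∃ (σ : V ≃ Fin n) (c : (FS X (starGraphFin n)).Walk σ σ),
        c.IsCycle ∧ c.length = 4 + 4 * p₂.length + 2 * (p₃.length + p₄.length)) ∧
      (FS X (starGraphFin n)).egirth
        ≤ ((4 + 4 * p₂.length + 2 * (p₃.length + p₄.length) : ℕ) : ℕ∞) := by
  classical
  have hθ : IsTheta4 p₁ p₂ p₃ p₄ :=
    ⟨hl₁, h₁, h₂, h₃, h₄, by omega, by omega, by omega, hd₂₃, hd₂₄, hd₃₄⟩
  obtain ⟨σ, C, hC, hlen⟩ := hθ.exists_isCycle_FS_starGraphFin hV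
  have hlen' : C.length = 4 + 4 * p₂.length + 2 * (p₃.length + p₄.length) := by
    rw [hlen, hθ.length_thetaRoute]; ring
  exact ⟨⟨σ, C, hC, hlen'⟩, hlen' ▸ egirth_le_length hC⟩

/-- Let `X` be a θ₄-graph on `n` vertices: two vertices `v ≠ w` joined by four pairwise
internally disjoint paths `p₁, p₂, p₃, p₄` of lengths
`p₁.length = 1 < p₂.length ≤ p₃.length ≤ p₄.length`. Then `FS(X, Star_n)` contains a
cycle of length `4 + 4·p₂.length + 2·(p₃.length + p₄.length)`; in particular its girth
is at most this quantity. -/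
theorem stmt18 {V : Type} [Fintype V] (n : ℕ) (hV : Fintype.card V = n)
    (X : SimpleGraph V) (v w : V) (hvw : v ≠ w)
    (p₁ p₂ p₃ p₄ : X.Walk v w)
    (h₁ : p₁.IsPath) (h₂ : p₂.IsPath) (h₃ : p₃.IsPath) (h₄ : p₄.IsPath)
    (hd₁₂ : ∀ x : V, x ∈ p₁.support → x ∈ p₂.support → x = v ∨ x = w)
    (hd₁₃ : ∀ x : V, x ∈ p₁.support → x ∈ p₃.support → x = v ∨ x = w)
    (hd₁₄ : ∀ x : V, x ∈ p₁.support → x ∈ p₄.support → x = v ∨ x = w)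
    (hd₂₃ : ∀ x : V, x ∈ p₂.support → x ∈ p₃.support → x = v ∨ x = w)
    (hd₂₄ : ∀ x : V, x ∈ p₂.support → x ∈ p₄.support → x = v ∨ x = w)
    (hd₃₄ : ∀ x : V, x ∈ p₃.support → x ∈ p₄.support → x = v ∨ x = w)
    (hl₁ : p₁.length = 1) (hl₂ : 1 < p₂.length)
    (hl₂₃ : p₂.length ≤ p₃.length) (hl₃₄ : p₃.length ≤ p₄.length)
    (hedges : X.edgeSet = p₁.toSubgraph.edgeSet ∪ p₂.toSubgraph.edgeSet
      ∪ p₃.toSubgraph.edgeSet ∪ p₄.toSubgraph.edgeSet)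
    (hverts : ∀ x : V,
      x ∈ p₁.support ∨ x ∈ p₂.support ∨ x ∈ p₃.support ∨ x ∈ p₄.support) :
    (∃ (σ : V ≃ Fin n) (c : (FS X (starGraphFin n)).Walk σ σ),
        c.IsCycle ∧ c.length = 4 + 4 * p₂.length + 2 * (p₃.length + p₄.length)) ∧
      (FS X (starGraphFin n)).egirth
        ≤ ((4 + 4 * p₂.length + 2 * (p₃.length + p₄.length) : ℕ) : ℕ∞) :=
  stmt18_general n hV X v w p₁ p₂ p₃ p₄ h₁ h₂ h₃ h₄ hd₂₃ hd₂₄ hd₃₄ hl₁ hl₂ hl₂₃ hl₃₄
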